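/- arXiv:1510.03544 — 2 statements merged into one kernel-verified Lean document; each statement's English description precedes it below -/
import Mathlib

section
/- Let w be a 1-admissible weight on ℝⁿ. Then every compact set S ⊆ ℝⁿ with ℋ^h(S) = 0 is L^∞_{1/w}-removable for the equation div v = 0. -/
open MeasureTheory Metric Filter Set ENNReal

noncomputable section

variable {n : ℕ}

/-- Euclidean space `ℝⁿ`. -/
abbrev Eu (n : ℕ) := EuclideanSpace ℝ (Fin n)

/-- Integral of the weight `w` over a set (with respect to Lebesgue measure). -/
def wInt (w : Eu n → ℝ) (s : Set (Eu n)) : ℝ≥0∞ :=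
  ∫⁻ x in s, ENNReal.ofReal (w x)

/-- A weight: locally integrable and a.e. positive. -/
def IsWeight (w : Eu n → ℝ) : Prop :=
  MeasureTheory.LocallyIntegrable w volume ∧
    ∀ᵐ x ∂(volume : Measure (Eu n)), 0 < w x

/-- `w` is doubling with constant `C`. -/
def IsDoublingWeight (w : Eu n → ℝ) (C : ℝ) : Prop :=
  1 ≤ C ∧ ∀ (x : Eu n) (r : ℝ), 0 < r →
    wInt w (ball x (2 * r)) ≤ ENNReal.ofReal C * wInt w (ball x r)

/-- The measure function `h(B(x,r)) = (1/r) ∫_{B(x,r)} w`. -/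
def hB (w : Eu n → ℝ) (x : Eu n) (r : ℝ) : ℝ≥0∞ :=
  ENNReal.ofReal (1 / r) * wInt w (ball x r)

/-- The size-`δ` weighted Hausdorff content `ℋ^h_δ`. -/
def Hcont (w : Eu n → ℝ) (δ : ℝ≥0∞) (S : Set (Eu n)) : ℝ≥0∞ :=
  ⨅ (c : ℕ → Eu n) (r : ℕ → ℝ)
    (_ : ∀ j, 0 < r j ∧ ENNReal.ofReal (r j) ≤ δ)
    (_ : S ⊆ ⋃ j, ball (c j) (r j)), ∑' j, hB w (c j) (r j)

/-- The weighted codimension-one Hausdorff measure `ℋ^h = lim_{δ→0} ℋ^h_δ`. -/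
def Hmeas (w : Eu n → ℝ) (S : Set (Eu n)) : ℝ≥0∞ :=
  ⨆ (δ : ℝ≥0∞) (_ : 0 < δ), Hcont w δ S

/-- A (real valued) Lipschitz function. -/
def IsLip (φ : Eu n → ℝ) : Prop := ∃ K, LipschitzWith K φ

/-- A compactly supported Lipschitz test function. -/
def LipTest (φ : Eu n → ℝ) : Prop := IsLip φ ∧ HasCompactSupport φ

/-- `∫ |∇φ| w`. -/
def gradInt (w : Eu n → ℝ) (φ : Eu n → ℝ) : ℝ≥0∞ :=
  ∫⁻ x, ENNReal.ofReal (‖fderiv ℝ φ x‖ * w x)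

/-- Miranda's metric weighted variation `‖Du‖_w`. -/
def varW (w : Eu n → ℝ) (u : Eu n → ℝ) : ℝ≥0∞ :=
  ⨅ (φ : ℕ → Eu n → ℝ) (_ : ∀ k, IsLip (φ k))
    (_ : Filter.Tendsto (fun k => ∫⁻ x, ENNReal.ofReal (|φ k x - u x| * w x))
          atTop (nhds 0)),
    Filter.liminf (fun k => gradInt w (φ k)) atTop

/-- The weighted perimeter `P_w(B) = ‖Dχ_B‖_w`. -/
def perim (w : Eu n → ℝ) (B : Set (Eu n)) : ℝ≥0∞ :=
  varW w (Set.indicator B (fun _ => 1))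

/-- The weighted measure `w dx`. -/
def wMeasure (w : Eu n → ℝ) : Measure (Eu n) :=
  (volume : Measure (Eu n)).withDensity (fun x => ENNReal.ofReal (w x))

/-- The weighted `(1,q)`-Poincaré inequality on balls. -/
def PoincareP (q : ℝ) (w : Eu n → ℝ) : Prop :=
  ∃ C > (0:ℝ), ∃ τ > (1:ℝ), ∀ φ : Eu n → ℝ, LipTest φ →
    ∀ (x : Eu n) (r : ℝ), 0 < r →
      (wMeasure w (ball x r))⁻¹ *
        ∫⁻ y in ball x r,
          ENNReal.ofReal |φ y - ⨍ z in ball x r, φ z ∂(wMeasure w)| ∂(wMeasure w)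
      ≤ ENNReal.ofReal (C * r) *
        ((wMeasure w (ball x (τ * r)))⁻¹ *
          ∫⁻ y in ball x (τ * r),
            (ENNReal.ofReal ‖fderiv ℝ φ y‖) ^ q ∂(wMeasure w)) ^ (1 / q)

/-- A `q`-admissible weight: a doubling weight supporting a `(1,q)`-Poincaré inequality. -/
def Admissible (q : ℝ) (w : Eu n → ℝ) : Prop :=
  IsWeight w ∧ (∃ C, IsDoublingWeight w C) ∧ PoincareP q w

/-- The pairing `⟨div v, φ⟩ = -∫ v·∇φ`. -/
def divPairing (v : Eu n → Eu n) (φ : Eu n → ℝ) : ℝ :=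
  -∫ x, fderiv ℝ φ x (v x)

/-- Membership in `L^∞_{1/w}(ℝⁿ,ℝⁿ)`. -/
def MemLinfInv (w : Eu n → ℝ) (v : Eu n → Eu n) : Prop :=
  AEStronglyMeasurable v volume ∧
    ∃ M : ℝ, ∀ᵐ x ∂(volume : Measure (Eu n)), ‖v x‖ ≤ M * w x

/-- `div v = 0` outside the compact set `S`. -/
def DivZeroOutside (v : Eu n → Eu n) (S : Set (Eu n)) : Prop :=
  ∀ φ : Eu n → ℝ, LipTest φ → Disjoint (tsupport φ) S → divPairing v φ = 0

/-- `S` is `L^∞_{1/w}`-removable for `div v = 0`. -/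
def RemovableLinf (w : Eu n → ℝ) (S : Set (Eu n)) : Prop :=
  ∀ v : Eu n → Eu n, MemLinfInv w v → DivZeroOutside v S →
    ∀ φ : Eu n → ℝ, LipTest φ → divPairing v φ = 0

/-- Membership in `L^p_{1/w}(ℝⁿ,ℝⁿ)`. -/
def MemLpInv (p : ℝ) (w : Eu n → ℝ) (v : Eu n → Eu n) : Prop :=
  AEStronglyMeasurable v volume ∧
    (∫⁻ x, (ENNReal.ofReal ‖v x‖) ^ p * (ENNReal.ofReal (w x))⁻¹) < ⊤

/-- `S` is `L^p_{1/w}`-removable for `div v = 0`. -/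
def RemovableLp (p : ℝ) (w : Eu n → ℝ) (S : Set (Eu n)) : Prop :=
  ∀ v : Eu n → Eu n, MemLpInv p w v → DivZeroOutside v S →
    ∀ φ : Eu n → ℝ, LipTest φ → divPairing v φ = 0

/-- The Muckenhoupt `A_q` condition, `1 < q < ∞`. -/
def MuckenhouptAq (q : ℝ) (v : Eu n → ℝ) : Prop :=
  ∃ C : ℝ, ∀ (x : Eu n) (r : ℝ), 0 < r →
    (⨍ y in ball x r, v y) *
      (⨍ y in ball x r, (v y) ^ (1 / (1 - q))) ^ (q - 1) ≤ C

/-- The weighted Sobolev `q`-capacity with respect to the weight `v`. -/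
def SobCap (q : ℝ) (v : Eu n → ℝ) (E : Set (Eu n)) : ℝ≥0∞ :=
  ⨅ (φ : Eu n → ℝ)
    (_ : ContDiff ℝ (⊤ : ℕ∞) φ ∧ HasCompactSupport φ ∧
          ∃ U, IsOpen U ∧ E ⊆ U ∧ ∀ x ∈ U, 1 ≤ φ x),
    ∫⁻ x, (ENNReal.ofReal (|φ x| ^ q) + ENNReal.ofReal (‖fderiv ℝ φ x‖ ^ q)) *
      ENNReal.ofReal (v x)

/-- The `R`-truncated Riesz potential (of order one) of a measure. -/
def rieszTrunc (R : ℝ) (μ : Measure (Eu n)) (x : Eu n) : ℝ≥0∞ :=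
  ∫⁻ y in ball x R, ENNReal.ofReal (‖x - y‖ ^ (1 - (n : ℝ))) ∂μ

/-- The `(p, 1/w; R)`-energy of a measure. -/
def rieszEnergy (p R : ℝ) (w : Eu n → ℝ) (μ : Measure (Eu n)) : ℝ≥0∞ :=
  ∫⁻ x, (rieszTrunc R μ x) ^ p * (ENNReal.ofReal (w x))⁻¹

open NNReal

namespace RemAux

/-- A basic Lipschitz cutoff: `1` on `ball c r`, `0` outside `closedBall c (2r)`. -/
def cutoff (c : Eu n) (r : ℝ) : Eu n → ℝ :=
  fun x => max 0 (min 1 (2 - r⁻¹ * dist x c))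

lemma cutoff_nonneg (c : Eu n) (r : ℝ) (x : Eu n) : 0 ≤ cutoff c r x := le_max_left _ _

lemma cutoff_le_one (c : Eu n) (r : ℝ) (x : Eu n) : cutoff c r x ≤ 1 :=
  max_le zero_le_one (min_le_left _ _)

lemma cutoff_lipschitz {r : ℝ} (hr : 0 < r) (c : Eu n) :
    LipschitzWith (Real.toNNReal r⁻¹) (cutoff c r) := by
  apply LipschitzWith.of_dist_le_mul
  intro x y
  rw [Real.dist_eq]
  have h1 : |cutoff c r x - cutoff c r y|
      ≤ |min 1 (2 - r⁻¹ * dist x c) - min 1 (2 - r⁻¹ * dist y c)| := by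
    simpa [cutoff, max_comm] using
      abs_max_sub_max_le_abs (min 1 (2 - r⁻¹ * dist x c)) (min 1 (2 - r⁻¹ * dist y c)) 0
  have h2 : |min 1 (2 - r⁻¹ * dist x c) - min 1 (2 - r⁻¹ * dist y c)|
      ≤ |(2 - r⁻¹ * dist x c) - (2 - r⁻¹ * dist y c)| := by
    simpa using abs_min_sub_min_le_max 1 (2 - r⁻¹ * dist x c) 1 (2 - r⁻¹ * dist y c)
  have h3 : |(2 - r⁻¹ * dist x c) - (2 - r⁻¹ * dist y c)| = r⁻¹ * |dist x c - dist y c| := by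
    have hxy : (2 - r⁻¹ * dist x c) - (2 - r⁻¹ * dist y c) = r⁻¹ * (dist y c - dist x c) := by
      ring
    rw [hxy, abs_mul, abs_of_nonneg (le_of_lt (inv_pos.mpr hr)), abs_sub_comm]
  have h4 : |dist x c - dist y c| ≤ dist x y := abs_dist_sub_le x y c
  have hcoe : ((Real.toNNReal r⁻¹ : ℝ≥0) : ℝ) = r⁻¹ :=
    Real.coe_toNNReal r⁻¹ (le_of_lt (inv_pos.mpr hr))
  calc |cutoff c r x - cutoff c r y| ≤ r⁻¹ * |dist x c - dist y c| := by
        calc _ ≤ _ := h1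
        _ ≤ _ := h2
        _ = _ := h3
    _ ≤ r⁻¹ * dist x y := by
        exact mul_le_mul_of_nonneg_left h4 (le_of_lt (inv_pos.mpr hr))
    _ = (Real.toNNReal r⁻¹ : ℝ) * dist x y := by rw [hcoe]

lemma cutoff_eq_one {c x : Eu n} {r : ℝ} (hr : 0 < r) (h : dist x c < r) :
    cutoff c r x = 1 := by
  have h1 : r⁻¹ * dist x c ≤ 1 := by
    rw [inv_mul_le_iff₀ hr, mul_one]
    exact le_of_lt h
  have : min 1 (2 - r⁻¹ * dist x c) = 1 := min_eq_left (by linarith)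
  rw [cutoff, this]
  exact max_eq_right zero_le_one

lemma cutoff_eq_zero {c x : Eu n} {r : ℝ} (hr : 0 < r) (h : 2 * r < dist x c) :
    cutoff c r x = 0 := by
  have h1 : 2 < r⁻¹ * dist x c := by
    rw [lt_inv_mul_iff₀ hr]
    linarith
  have : min 1 (2 - r⁻¹ * dist x c) ≤ 0 := (min_le_right _ _).trans (by linarith)
  exact max_eq_left this

lemma fderiv_cutoff_zero {c x : Eu n} {r : ℝ} (hr : 0 < r) (h : x ∉ closedBall c (2 * r)) :
    fderiv ℝ (cutoff c r) x = 0 := by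
  have hx : 2 * r < dist x c := not_le.mp (by simpa [mem_closedBall] using h)
  have hopen : IsOpen {y : Eu n | 2 * r < dist y c} :=
    isOpen_lt continuous_const (continuous_id.dist continuous_const)
  have hev : cutoff c r =ᶠ[nhds x] (fun _ => (0 : ℝ)) := by
    filter_upwards [hopen.mem_nhds hx] with y hy
    exact cutoff_eq_zero hr hy
  rw [hev.fderiv_eq]
  exact fderiv_const_apply 0

lemma norm_fderiv_cutoff_le {c : Eu n} {r : ℝ} (hr : 0 < r) (x : Eu n) :
    ‖fderiv ℝ (cutoff c r) x‖ ≤ r⁻¹ := by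
  have := norm_fderiv_le_of_lipschitz ℝ (cutoff_lipschitz hr c) (x₀ := x)
  rwa [Real.coe_toNNReal r⁻¹ (le_of_lt (inv_pos.mpr hr))] at this

/-- A finite `sup'` of `K`-Lipschitz functions is `K`-Lipschitz. -/
lemma lipschitz_sup' (t : Finset ℕ) (ht : t.Nonempty) (f : ℕ → Eu n → ℝ) (K : ℝ≥0)
    (hf : ∀ j ∈ t, LipschitzWith K (f j)) :
    LipschitzWith K (fun x => t.sup' ht (fun j => f j x)) := by
  revert hf
  induction ht using Finset.Nonempty.cons_induction with
  | singleton j => intro hf; simpa using hf j (by simp)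
  | cons j s hj hs ih =>
      intro hf
      have h1 : LipschitzWith K (f j) := hf j (by simp)
      have h2 : LipschitzWith K (fun x => s.sup' hs (fun k => f k x)) :=
        ih (fun k hk => hf k (Finset.mem_cons_of_mem hk))
      have h3 := h1.max h2
      have heq : (fun x => (Finset.cons j s hj).sup' (Finset.cons_nonempty hj) (fun k => f k x))
          = fun x => max (f j x) (s.sup' hs (fun k => f k x)) :=
        funext fun x => Finset.sup'_cons hs (fun k => f k x)
      rw [heq]
      simpa using h3

/-- At a point where all functions and the sup are differentiable, the derivative of the
finite sup agrees with that of one of the functions. -/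
lemma fderiv_sup'_eq (t : Finset ℕ) (ht : t.Nonempty) (f : ℕ → Eu n → ℝ) (x : Eu n)
    (hdf : ∀ j ∈ t, DifferentiableAt ℝ (f j) x)
    (hg : DifferentiableAt ℝ (fun y => t.sup' ht (fun j => f j y)) x) :
    ∃ j ∈ t, fderiv ℝ (fun y => t.sup' ht (fun j => f j y)) x = fderiv ℝ (f j) x := by
  obtain ⟨j, hj, hjx⟩ := Finset.exists_mem_eq_sup' ht (fun j => f j x)
  refine ⟨j, hj, ?_⟩
  have hmin : IsLocalMin (fun y => t.sup' ht (fun k => f k y) - f j y) x := by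
    apply Filter.Eventually.of_forall
    intro y
    have h1 : f j y ≤ t.sup' ht (fun k => f k y) := Finset.le_sup' (fun k => f k y) hj
    have h2 : t.sup' ht (fun k => f k x) = f j x := hjx
    simp only
    linarith
  have hz := hmin.fderiv_eq_zero
  have hsub : fderiv ℝ (fun y => t.sup' ht (fun k => f k y) - f j y) x
      = fderiv ℝ (fun y => t.sup' ht (fun k => f k y)) x - fderiv ℝ (f j) x :=
    fderiv_sub hg (hdf j hj)
  rw [hsub] at hz
  exact sub_eq_zero.mp hz

lemma aesm_pairing (f : Eu n → ℝ) {v : Eu n → Eu n}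
    (hv : AEStronglyMeasurable v volume) :
    AEStronglyMeasurable (fun x => fderiv ℝ f x (v x)) volume := by
  have h1 : AEStronglyMeasurable (fderiv ℝ f) volume :=
    (measurable_fderiv ℝ f).aestronglyMeasurable
  exact (ContinuousLinearMap.apply ℝ ℝ :
    Eu n →L[ℝ] (Eu n →L[ℝ] ℝ) →L[ℝ] ℝ).aestronglyMeasurable_comp₂ hv h1

lemma lipschitzWith_mul {f g : Eu n → ℝ} {Kf Kg : ℝ≥0} {A B : ℝ}
    (hf : LipschitzWith Kf f) (hg : LipschitzWith Kg g)
    (hA : ∀ x, |f x| ≤ A) (hB : ∀ x, |g x| ≤ B) :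
    LipschitzWith (Real.toNNReal (A * Kg + B * Kf)) (fun x => f x * g x) := by
  apply LipschitzWith.of_dist_le_mul
  intro x y
  rw [Real.dist_eq]
  have hgd : |g x - g y| ≤ (Kg : ℝ) * dist x y := by
    have := hg.dist_le_mul x y; rwa [Real.dist_eq] at this
  have hfd : |f x - f y| ≤ (Kf : ℝ) * dist x y := by
    have := hf.dist_le_mul x y; rwa [Real.dist_eq] at this
  have hA0 : 0 ≤ A := (abs_nonneg _).trans (hA x)
  have hB0 : 0 ≤ B := (abs_nonneg _).trans (hB y)
  have h1 : f x * g x - f y * g y = f x * (g x - g y) + g y * (f x - f y) := by ring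
  have key : |f x * g x - f y * g y| ≤ A * ((Kg:ℝ) * dist x y) + B * ((Kf:ℝ) * dist x y) := by
    calc |f x * g x - f y * g y| ≤ |f x| * |g x - g y| + |g y| * |f x - f y| := by
          rw [h1]; refine (abs_add_le _ _).trans ?_; rw [abs_mul, abs_mul]
      _ ≤ A * ((Kg:ℝ) * dist x y) + B * ((Kf:ℝ) * dist x y) :=
          add_le_add (mul_le_mul (hA x) hgd (abs_nonneg _) hA0)
            (mul_le_mul (hB y) hfd (abs_nonneg _) hB0)
  have h2 : A * ((Kg:ℝ) * dist x y) + B * ((Kf:ℝ) * dist x y)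
      = (A * (Kg:ℝ) + B * (Kf:ℝ)) * dist x y := by ring
  calc |f x * g x - f y * g y| ≤ (A * (Kg:ℝ) + B * (Kf:ℝ)) * dist x y := by
        rw [← h2]; exact key
    _ ≤ (Real.toNNReal (A * (Kg:ℝ) + B * (Kf:ℝ)) : ℝ) * dist x y :=
        mul_le_mul_of_nonneg_right (Real.le_coe_toNNReal _) dist_nonneg

lemma integrable_pairing {w : Eu n → ℝ} (hw : LocallyIntegrable w volume)
    {f : Eu n → ℝ} {K : ℝ≥0} (hf : LipschitzWith K f) (hfc : HasCompactSupport f)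
    {v : Eu n → Eu n} (hv : AEStronglyMeasurable v volume) {M : ℝ}
    (hM : ∀ᵐ x ∂(volume : Measure (Eu n)), ‖v x‖ ≤ M * w x) :
    Integrable (fun x => fderiv ℝ f x (v x)) volume := by
  have hw' : IntegrableOn (fun x => (K : ℝ) * (M * w x)) (tsupport f) volume := by
    exact ((hw.integrableOn_isCompact hfc).const_mul M).const_mul (K : ℝ)
  refine Integrable.mono' (hw'.integrable_indicator (isClosed_tsupport f).measurableSet)
    (aesm_pairing f hv) ?_
  filter_upwards [hM] with x hx
  by_cases hxs : x ∈ tsupport f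
  · rw [Set.indicator_of_mem hxs]
    calc ‖fderiv ℝ f x (v x)‖ ≤ ‖fderiv ℝ f x‖ * ‖v x‖ := (fderiv ℝ f x).le_opNorm _
      _ ≤ (K : ℝ) * (M * w x) :=
          mul_le_mul (norm_fderiv_le_of_lipschitz ℝ hf) hx (norm_nonneg _) K.coe_nonneg
  · have hz : fderiv ℝ f x = 0 :=
      Function.notMem_support.mp (fun hmem => hxs (support_fderiv_subset ℝ hmem))
    rw [Set.indicator_of_notMem hxs, hz]
    simp

private lemma piece_bound {n : ℕ} {w : Eu n → ℝ} {C : ℝ}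
    (hCdbl : ∀ (x : Eu n) (r : ℝ), 0 < r →
      wInt w (ball x (2 * r)) ≤ ENNReal.ofReal C * wInt w (ball x r))
    {M : ℝ} (hM : 0 < M) (cc : Eu n) {rr : ℝ} (hrr : 0 < rr) {a : ℝ} (ha : 0 ≤ a) :
    (∫⁻ x, Set.indicator (closedBall cc (2 * rr)) (fun y => ENNReal.ofReal (a * (M * w y))) x)
      ≤ ENNReal.ofReal (a * M) *
        (ENNReal.ofReal C * (ENNReal.ofReal C * wInt w (ball cc rr))) := by
  rw [lintegral_indicator measurableSet_closedBall]
  have hpt : ∀ y : Eu n, ENNReal.ofReal (a * (M * w y))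
      = ENNReal.ofReal (a * M) * ENNReal.ofReal (w y) := by
    intro y
    rw [← ENNReal.ofReal_mul (by positivity), mul_assoc]
  calc (∫⁻ y in closedBall cc (2 * rr), ENNReal.ofReal (a * (M * w y)))
      = ∫⁻ y in closedBall cc (2 * rr), ENNReal.ofReal (a * M) * ENNReal.ofReal (w y) := by
        simp_rw [hpt]
    _ = ENNReal.ofReal (a * M) * ∫⁻ y in closedBall cc (2 * rr), ENNReal.ofReal (w y) :=
        lintegral_const_mul' _ _ ENNReal.ofReal_ne_top
    _ ≤ ENNReal.ofReal (a * M) * wInt w (ball cc (2 * (2 * rr))) := by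
        apply mul_le_mul_right
        simp only [wInt]
        apply lintegral_mono_set
        intro y hy
        rw [mem_ball]
        calc dist y cc ≤ 2 * rr := mem_closedBall.mp hy
          _ < 2 * (2 * rr) := by linarith
    _ ≤ ENNReal.ofReal (a * M) * (ENNReal.ofReal C * wInt w (ball cc (2 * rr))) :=
        mul_le_mul_right (hCdbl cc (2 * rr) (by linarith)) _
    _ ≤ ENNReal.ofReal (a * M) *
        (ENNReal.ofReal C * (ENNReal.ofReal C * wInt w (ball cc rr))) :=
        mul_le_mul_right (mul_le_mul_right (hCdbl cc rr hrr) _) _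

end RemAux

/-- **Sufficiency.** If `w` is a `1`-admissible weight, then every compact `S ⊆ ℝⁿ` with
`ℋ^h(S) = 0` is `L^∞_{1/w}`-removable for the equation `div v = 0`. -/
theorem removable_of_Hmeas_zero {n : ℕ} (w : Eu n → ℝ) (hadm : Admissible 1 w)
    (S : Set (Eu n)) (hS : IsCompact S) (h0 : Hmeas w S = 0) :
    RemovableLinf w S := by
  classical
  obtain ⟨⟨hwloc, hwpos⟩, ⟨C, hC1, hCdbl⟩, -⟩ := hadm
  intro v hv hdiv φ hφ
  obtain ⟨⟨Kφ, hKφ⟩, hφc⟩ := hφ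
  obtain ⟨hvm, M0, hM0⟩ := hv
  set M : ℝ := |M0| + 1 with hMdef
  have hMpos : 0 < M := by positivity
  have hM : ∀ᵐ x ∂(volume : Measure (Eu n)), ‖v x‖ ≤ M * w x := by
    filter_upwards [hM0, hwpos] with x h1 h2
    calc ‖v x‖ ≤ M0 * w x := h1
      _ ≤ M * w x := by
        apply mul_le_mul_of_nonneg_right _ (le_of_lt h2)
        calc M0 ≤ |M0| := le_abs_self _
          _ ≤ M := by rw [hMdef]; linarith
  obtain ⟨A, hA⟩ := hφc.exists_bound_of_continuous hKφ.continuous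
  have hA' : ∀ x, |φ x| ≤ A := fun x => by simpa [Real.norm_eq_abs] using hA x
  have hA0 : 0 ≤ A := (abs_nonneg _).trans (hA' 0)
  rcases S.eq_empty_or_nonempty with hSe | hSne
  · exact hdiv φ ⟨⟨Kφ, hKφ⟩, hφc⟩ (by simp [hSe])
  have hC0 : (0:ℝ) < C := lt_of_lt_of_le one_pos hC1
  have main : ∀ ε : ℝ, 0 < ε → |∫ x, fderiv ℝ φ x (v x)| ≤ ε := by
    intro ε hε
    set D : ℝ := (A * M + (Kφ : ℝ) * M) * (C * C) + 1 with hDdef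
    have hDpos : 0 < D := by positivity
    -- extract a small cover from `Hmeas w S = 0`
    have h1 : Hcont w 1 S = 0 := by
      refine le_antisymm ?_ (zero_le)
      rw [← h0]
      exact le_iSup₂ (f := fun (δ : ℝ≥0∞) (_ : 0 < δ) => Hcont w δ S) 1 one_pos
    have h2 : Hcont w 1 S < ENNReal.ofReal (ε / D) := by
      rw [h1]; exact ENNReal.ofReal_pos.mpr (div_pos hε hDpos)
    simp only [Hcont] at h2
    rw [iInf_lt_iff] at h2
    obtain ⟨c, h2⟩ := h2
    rw [iInf_lt_iff] at h2
    obtain ⟨r, h2⟩ := h2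
    rw [iInf_lt_iff] at h2
    obtain ⟨hr, h2⟩ := h2
    rw [iInf_lt_iff] at h2
    obtain ⟨hcov, hsum⟩ := h2
    -- a finite subcover of the compact set `S`
    obtain ⟨t, hts⟩ := hS.elim_finite_subcover (fun j => ball (c j) (r j))
      (fun j => isOpen_ball) hcov
    have ht : t.Nonempty := by
      obtain ⟨x0, hx0⟩ := hSne
      obtain ⟨j, hj, -⟩ := Set.mem_iUnion₂.mp (hts hx0)
      exact ⟨j, hj⟩
    -- the cutoff function
    set η : Eu n → ℝ := fun y => t.sup' ht (fun j => RemAux.cutoff (c j) (r j) y) with hηdef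
    set Kη : ℝ≥0 := t.sup (fun j => Real.toNNReal (r j)⁻¹) with hKηdef
    have hηlip : LipschitzWith Kη η :=
      RemAux.lipschitz_sup' t ht _ Kη (fun j hj =>
        (RemAux.cutoff_lipschitz (hr j).1 (c j)).weaken
          (by rw [hKηdef]; exact Finset.le_sup (f := fun j => Real.toNNReal (r j)⁻¹) hj))
    have hη0 : ∀ x, 0 ≤ η x := fun x => by
      obtain ⟨j0, hj0⟩ := ht
      exact (RemAux.cutoff_nonneg (c j0) (r j0) x).trans
        (Finset.le_sup' (fun j => RemAux.cutoff (c j) (r j) x) hj0)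
    have hη1 : ∀ x, η x ≤ 1 := fun x =>
      Finset.sup'_le ht _ (fun j hj => RemAux.cutoff_le_one (c j) (r j) x)
    have hηU : ∀ x ∈ ⋃ j ∈ t, ball (c j) (r j), η x = 1 := by
      intro x hx
      obtain ⟨j, hj, hxj⟩ := Set.mem_iUnion₂.mp hx
      refine le_antisymm (hη1 x) ?_
      have h3 := Finset.le_sup' (fun k => RemAux.cutoff (c k) (r k) x) hj
      rwa [RemAux.cutoff_eq_one (hr j).1 (mem_ball.mp hxj)] at h3
    set ψ : Eu n → ℝ := fun y => φ y * (1 - η y) with hψdef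
    set χ : Eu n → ℝ := fun y => φ y * η y with hχdef
    have h1η : LipschitzWith Kη (fun y => 1 - η y) := by
      apply LipschitzWith.of_dist_le_mul
      intro x y
      have h3 := hηlip.dist_le_mul x y
      rw [Real.dist_eq] at h3 ⊢
      rw [show (1 - η x) - (1 - η y) = -(η x - η y) by ring, abs_neg]
      exact h3
    have h1ηb : ∀ x, |1 - η x| ≤ 1 := fun x =>
      abs_le.mpr ⟨by linarith [hη1 x], by linarith [hη0 x]⟩
    have hηb : ∀ x, |η x| ≤ 1 := fun x => abs_le.mpr ⟨by linarith [hη0 x], hη1 x⟩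
    have hψlip := RemAux.lipschitzWith_mul hKφ h1η hA' h1ηb
    have hχlip := RemAux.lipschitzWith_mul hKφ hηlip hA' hηb
    have hψc : HasCompactSupport ψ := hφc.mul_right
    have hχc : HasCompactSupport χ := hφc.mul_right
    have hdisj : Disjoint (tsupport ψ) S := by
      have hUo : IsOpen (⋃ j ∈ t, ball (c j) (r j)) := isOpen_biUnion (fun j _ => isOpen_ball)
      have hsup : tsupport ψ ⊆ (⋃ j ∈ t, ball (c j) (r j))ᶜ := by
        apply closure_minimal _ hUo.isClosed_compl
        intro x hx hxU
        apply hx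
        rw [hψdef]
        simp [hηU x hxU]
      exact Set.disjoint_left.mpr (fun x hx hxS => (hsup hx) (hts hxS))
    have hψ0 : ∫ x, fderiv ℝ ψ x (v x) = 0 := by
      have h3 := hdiv ψ ⟨⟨_, hψlip⟩, hψc⟩ hdisj
      simp only [divPairing, neg_eq_zero] at h3
      exact h3
    have hIψ := RemAux.integrable_pairing hwloc hψlip hψc hvm hM
    have hIχ := RemAux.integrable_pairing hwloc hχlip hχc hvm hM
    have hcutd : ∀ᵐ x ∂(volume : Measure (Eu n)), ∀ j ∈ t,
        DifferentiableAt ℝ (RemAux.cutoff (c j) (r j)) x :=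
      (Filter.eventually_all_finset t).mpr
        (fun j hj => (RemAux.cutoff_lipschitz (hr j).1 (c j)).ae_differentiableAt)
    have hkey2 : (fun x => fderiv ℝ φ x (v x))
        =ᵐ[(volume : Measure (Eu n))] (fun x => fderiv ℝ ψ x (v x) + fderiv ℝ χ x (v x)) := by
      filter_upwards [hKφ.ae_differentiableAt, hηlip.ae_differentiableAt] with x hφx hηx
      have hψx : DifferentiableAt ℝ ψ x := hφx.mul ((differentiableAt_const (1:ℝ)).sub hηx)
      have hχx : DifferentiableAt ℝ χ x := hφx.mul hηx
      have hadd : fderiv ℝ (fun y => ψ y + χ y) x = fderiv ℝ ψ x + fderiv ℝ χ x :=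
        fderiv_add hψx hχx
      have heq : (fun y => ψ y + χ y) = φ := funext fun y => by
        simp only [hψdef, hχdef]; ring
      rw [heq] at hadd
      rw [hadd]
      simp
    have hsplit : ∫ x, fderiv ℝ φ x (v x) = ∫ x, fderiv ℝ χ x (v x) := by
      rw [integral_congr_ae hkey2, integral_add hIψ hIχ, hψ0, zero_add]
    rw [hsplit]
    -- pointwise bound functions
    set F1 : Eu n → ℝ≥0∞ := fun x => ∑ k ∈ t, Set.indicator (closedBall (c k) (2 * r k))
      (fun y => ENNReal.ofReal ((A * (r k)⁻¹) * (M * w y))) x with hF1def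
    set F2 : Eu n → ℝ≥0∞ := fun x => ∑ k ∈ t, Set.indicator (closedBall (c k) (2 * r k))
      (fun y => ENNReal.ofReal ((Kφ : ℝ) * (M * w y))) x with hF2def
    have haebound : ∀ᵐ x ∂(volume : Measure (Eu n)),
        ENNReal.ofReal ‖fderiv ℝ χ x (v x)‖ ≤ F1 x + F2 x := by
      filter_upwards [hKφ.ae_differentiableAt, hηlip.ae_differentiableAt, hcutd, hM, hwpos]
        with x hφx hηx hcx hvx hwx
      have hηx' : DifferentiableAt ℝ
          (fun y => t.sup' ht (fun j => RemAux.cutoff (c j) (r j) y)) x := by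
        rw [← hηdef]; exact hηx
      obtain ⟨j, hj, hfj⟩ := RemAux.fderiv_sup'_eq t ht _ x (fun k hk => hcx k hk) hηx'
      rw [← hηdef] at hfj
      obtain ⟨j', hj', hfj'⟩ := Finset.exists_mem_eq_sup' ht
        (fun k => RemAux.cutoff (c k) (r k) x)
      have hηxval : η x = RemAux.cutoff (c j') (r j') x := by rw [hηdef]; exact hfj'
      have hχf : fderiv ℝ χ x = φ x • fderiv ℝ η x + η x • fderiv ℝ φ x := by
        rw [hχdef]
        exact fderiv_mul hφx hηx
      have hMw0 : 0 ≤ M * w x := le_trans (norm_nonneg _) hvx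
      have hb1 : ENNReal.ofReal (|φ x| * ‖fderiv ℝ η x‖ * ‖v x‖) ≤ F1 x := by
        by_cases hmem : x ∈ closedBall (c j) (2 * r j)
        · have e1 : ‖fderiv ℝ η x‖ ≤ (r j)⁻¹ := by
            rw [hfj]; exact RemAux.norm_fderiv_cutoff_le (hr j).1 x
          have hstep : |φ x| * ‖fderiv ℝ η x‖ * ‖v x‖ ≤ (A * (r j)⁻¹) * (M * w x) :=
            mul_le_mul (mul_le_mul (hA' x) e1 (norm_nonneg _) hA0) hvx (norm_nonneg _)
              (mul_nonneg hA0 (le_of_lt (inv_pos.mpr (hr j).1)))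
          calc ENNReal.ofReal (|φ x| * ‖fderiv ℝ η x‖ * ‖v x‖)
              ≤ ENNReal.ofReal ((A * (r j)⁻¹) * (M * w x)) := ENNReal.ofReal_le_ofReal hstep
            _ = Set.indicator (closedBall (c j) (2 * r j))
                (fun y => ENNReal.ofReal ((A * (r j)⁻¹) * (M * w y))) x :=
                (Set.indicator_of_mem hmem
                  (fun y => ENNReal.ofReal ((A * (r j)⁻¹) * (M * w y)))).symm
            _ ≤ F1 x := by
                rw [hF1def]
                exact Finset.single_le_sum (f := fun k => Set.indicator
                  (closedBall (c k) (2 * r k))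
                  (fun y => ENNReal.ofReal ((A * (r k)⁻¹) * (M * w y))) x)
                  (fun k _ => zero_le) hj
        · have hz : fderiv ℝ η x = 0 := by
            rw [hfj]; exact RemAux.fderiv_cutoff_zero (hr j).1 hmem
          simp [hz]
      have hb2 : ENNReal.ofReal (η x * ‖fderiv ℝ φ x‖ * ‖v x‖) ≤ F2 x := by
        by_cases hmem : x ∈ closedBall (c j') (2 * r j')
        · have e1 : ‖fderiv ℝ φ x‖ ≤ (Kφ : ℝ) := norm_fderiv_le_of_lipschitz ℝ hKφ
          have hstep : η x * ‖fderiv ℝ φ x‖ * ‖v x‖ ≤ (Kφ : ℝ) * (M * w x) := by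
            calc η x * ‖fderiv ℝ φ x‖ * ‖v x‖ ≤ (1 * (Kφ : ℝ)) * (M * w x) :=
                mul_le_mul (mul_le_mul (hη1 x) e1 (norm_nonneg _) zero_le_one) hvx
                  (norm_nonneg _) (by positivity)
              _ = (Kφ : ℝ) * (M * w x) := by ring
          calc ENNReal.ofReal (η x * ‖fderiv ℝ φ x‖ * ‖v x‖)
              ≤ ENNReal.ofReal ((Kφ : ℝ) * (M * w x)) := ENNReal.ofReal_le_ofReal hstep
            _ = Set.indicator (closedBall (c j') (2 * r j'))
                (fun y => ENNReal.ofReal ((Kφ : ℝ) * (M * w y))) x :=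
                (Set.indicator_of_mem hmem
                  (fun y => ENNReal.ofReal ((Kφ : ℝ) * (M * w y)))).symm
            _ ≤ F2 x := by
                rw [hF2def]
                exact Finset.single_le_sum (f := fun k => Set.indicator
                  (closedBall (c k) (2 * r k))
                  (fun y => ENNReal.ofReal ((Kφ : ℝ) * (M * w y))) x)
                  (fun k _ => zero_le) hj'
        · have hz : η x = 0 := by
            rw [hηxval]
            exact RemAux.cutoff_eq_zero (hr j').1 (not_le.mp (by simpa [mem_closedBall] using hmem))
          simp [hz]
      have hnorm : ‖fderiv ℝ χ x (v x)‖
          ≤ |φ x| * ‖fderiv ℝ η x‖ * ‖v x‖ + η x * ‖fderiv ℝ φ x‖ * ‖v x‖ := by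
        calc ‖fderiv ℝ χ x (v x)‖ ≤ ‖fderiv ℝ χ x‖ * ‖v x‖ := (fderiv ℝ χ x).le_opNorm _
          _ ≤ (|φ x| * ‖fderiv ℝ η x‖ + η x * ‖fderiv ℝ φ x‖) * ‖v x‖ := by
              apply mul_le_mul_of_nonneg_right _ (norm_nonneg _)
              rw [hχf]
              calc ‖φ x • fderiv ℝ η x + η x • fderiv ℝ φ x‖
                  ≤ ‖φ x • fderiv ℝ η x‖ + ‖η x • fderiv ℝ φ x‖ := norm_add_le _ _
                _ = |φ x| * ‖fderiv ℝ η x‖ + |η x| * ‖fderiv ℝ φ x‖ := by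
                    rw [norm_smul, norm_smul, Real.norm_eq_abs, Real.norm_eq_abs]
                _ = |φ x| * ‖fderiv ℝ η x‖ + η x * ‖fderiv ℝ φ x‖ := by
                    rw [abs_of_nonneg (hη0 x)]
          _ = |φ x| * ‖fderiv ℝ η x‖ * ‖v x‖ + η x * ‖fderiv ℝ φ x‖ * ‖v x‖ := by ring
      calc ENNReal.ofReal ‖fderiv ℝ χ x (v x)‖
          ≤ ENNReal.ofReal (|φ x| * ‖fderiv ℝ η x‖ * ‖v x‖ + η x * ‖fderiv ℝ φ x‖ * ‖v x‖) :=
            ENNReal.ofReal_le_ofReal hnorm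
        _ ≤ ENNReal.ofReal (|φ x| * ‖fderiv ℝ η x‖ * ‖v x‖)
            + ENNReal.ofReal (η x * ‖fderiv ℝ φ x‖ * ‖v x‖) := ENNReal.ofReal_add_le
        _ ≤ F1 x + F2 x := add_le_add hb1 hb2
    -- integral computations
    have hBfact : ∀ k, ENNReal.ofReal ((r k)⁻¹) * wInt w (ball (c k) (r k)) = hB w (c k) (r k) := by
      intro k; simp only [hB, one_div]
    have hwle : ∀ k, wInt w (ball (c k) (r k)) ≤ hB w (c k) (r k) := by
      intro k
      simp only [hB, one_div]
      have h3 : (1:ℝ≥0∞) = ENNReal.ofReal (r k) * ENNReal.ofReal (r k)⁻¹ := by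
        rw [← ENNReal.ofReal_mul (le_of_lt (hr k).1), mul_inv_cancel₀ (ne_of_gt (hr k).1),
          ENNReal.ofReal_one]
      calc wInt w (ball (c k) (r k)) = 1 * wInt w (ball (c k) (r k)) := (one_mul _).symm
        _ = ENNReal.ofReal (r k) * (ENNReal.ofReal (r k)⁻¹ * wInt w (ball (c k) (r k))) := by
            rw [h3, mul_assoc]
        _ ≤ 1 * (ENNReal.ofReal (r k)⁻¹ * wInt w (ball (c k) (r k))) :=
            mul_le_mul_left (hr k).2 _
        _ = _ := one_mul _
    have hsumt : ∑ k ∈ t, hB w (c k) (r k) ≤ ENNReal.ofReal (ε / D) :=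
      le_of_lt (lt_of_le_of_lt (ENNReal.sum_le_tsum t) hsum)
    have hwm : AEMeasurable w (volume : Measure (Eu n)) :=
      hwloc.aestronglyMeasurable.aemeasurable
    have hmeas1 : ∀ (a : ℝ) (k : ℕ), AEMeasurable (Set.indicator (closedBall (c k) (2 * r k))
        (fun y => ENNReal.ofReal (a * (M * w y)))) (volume : Measure (Eu n)) := by
      intro a k
      exact (ENNReal.measurable_ofReal.comp_aemeasurable
        ((hwm.const_mul M).const_mul a)).indicator measurableSet_closedBall
    have hF1int : (∫⁻ x, F1 x) ≤ ENNReal.ofReal ((A * M) * (C * C)) * ∑ k ∈ t, hB w (c k) (r k) := by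
      rw [hF1def]
      rw [lintegral_finset_sum' t (fun k _ => hmeas1 _ k)]
      have hper : ∀ k ∈ t, (∫⁻ x, Set.indicator (closedBall (c k) (2 * r k))
          (fun y => ENNReal.ofReal ((A * (r k)⁻¹) * (M * w y))) x)
          ≤ ENNReal.ofReal ((A * M) * (C * C)) * hB w (c k) (r k) := by
        intro k hk
        calc (∫⁻ x, Set.indicator (closedBall (c k) (2 * r k))
            (fun y => ENNReal.ofReal ((A * (r k)⁻¹) * (M * w y))) x)
            ≤ ENNReal.ofReal ((A * (r k)⁻¹) * M) *
              (ENNReal.ofReal C * (ENNReal.ofReal C * wInt w (ball (c k) (r k)))) :=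
              RemAux.piece_bound hCdbl hMpos (c k) (hr k).1
                (mul_nonneg hA0 (le_of_lt (inv_pos.mpr (hr k).1)))
          _ = ENNReal.ofReal ((A * M) * (C * C)) *
              (ENNReal.ofReal ((r k)⁻¹) * wInt w (ball (c k) (r k))) := by
              rw [show (A * (r k)⁻¹) * M = (A * M) * (r k)⁻¹ by ring,
                ENNReal.ofReal_mul (by positivity : (0:ℝ) ≤ A * M),
                ENNReal.ofReal_mul (by positivity : (0:ℝ) ≤ A * M),
                ENNReal.ofReal_mul (le_of_lt hC0 : (0:ℝ) ≤ C)]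
              ring
          _ = ENNReal.ofReal ((A * M) * (C * C)) * hB w (c k) (r k) := by rw [hBfact k]
      calc (∑ k ∈ t, ∫⁻ x, Set.indicator (closedBall (c k) (2 * r k))
          (fun y => ENNReal.ofReal ((A * (r k)⁻¹) * (M * w y))) x)
          ≤ ∑ k ∈ t, ENNReal.ofReal ((A * M) * (C * C)) * hB w (c k) (r k) :=
            Finset.sum_le_sum hper
        _ = ENNReal.ofReal ((A * M) * (C * C)) * ∑ k ∈ t, hB w (c k) (r k) :=
            (Finset.mul_sum _ _ _).symm
    have hF2int : (∫⁻ x, F2 x)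
        ≤ ENNReal.ofReal (((Kφ : ℝ) * M) * (C * C)) * ∑ k ∈ t, hB w (c k) (r k) := by
      rw [hF2def]
      rw [lintegral_finset_sum' t (fun k _ => hmeas1 _ k)]
      have hper : ∀ k ∈ t, (∫⁻ x, Set.indicator (closedBall (c k) (2 * r k))
          (fun y => ENNReal.ofReal ((Kφ : ℝ) * (M * w y))) x)
          ≤ ENNReal.ofReal (((Kφ : ℝ) * M) * (C * C)) * hB w (c k) (r k) := by
        intro k hk
        calc (∫⁻ x, Set.indicator (closedBall (c k) (2 * r k))
            (fun y => ENNReal.ofReal ((Kφ : ℝ) * (M * w y))) x)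
            ≤ ENNReal.ofReal ((Kφ : ℝ) * M) *
              (ENNReal.ofReal C * (ENNReal.ofReal C * wInt w (ball (c k) (r k)))) :=
              RemAux.piece_bound hCdbl hMpos (c k) (hr k).1 Kφ.coe_nonneg
          _ ≤ ENNReal.ofReal ((Kφ : ℝ) * M) *
              (ENNReal.ofReal C * (ENNReal.ofReal C * hB w (c k) (r k))) :=
              mul_le_mul_right (mul_le_mul_right (mul_le_mul_right (hwle k) _) _) _
          _ = ENNReal.ofReal (((Kφ : ℝ) * M) * (C * C)) * hB w (c k) (r k) := by
              rw [ENNReal.ofReal_mul (by positivity : (0:ℝ) ≤ (Kφ : ℝ) * M),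
                ENNReal.ofReal_mul (le_of_lt hC0 : (0:ℝ) ≤ C)]
              ring
      calc (∑ k ∈ t, ∫⁻ x, Set.indicator (closedBall (c k) (2 * r k))
          (fun y => ENNReal.ofReal ((Kφ : ℝ) * (M * w y))) x)
          ≤ ∑ k ∈ t, ENNReal.ofReal (((Kφ : ℝ) * M) * (C * C)) * hB w (c k) (r k) :=
            Finset.sum_le_sum hper
        _ = ENNReal.ofReal (((Kφ : ℝ) * M) * (C * C)) * ∑ k ∈ t, hB w (c k) (r k) :=
            (Finset.mul_sum _ _ _).symm
    have hF1m : AEMeasurable F1 (volume : Measure (Eu n)) := by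
      rw [hF1def]
      exact Finset.aemeasurable_fun_sum t (fun k _ => hmeas1 _ k)
    have hfinal : ENNReal.ofReal |∫ x, fderiv ℝ χ x (v x)| ≤ ENNReal.ofReal ε := by
      calc ENNReal.ofReal |∫ x, fderiv ℝ χ x (v x)|
          = (‖∫ x, fderiv ℝ χ x (v x)‖₊ : ℝ≥0∞) := by
            rw [← enorm_eq_nnnorm, ← ofReal_norm, Real.norm_eq_abs]
        _ ≤ ∫⁻ x, (‖fderiv ℝ χ x (v x)‖₊ : ℝ≥0∞) := enorm_integral_le_lintegral_enorm _
        _ = ∫⁻ x, ENNReal.ofReal ‖fderiv ℝ χ x (v x)‖ :=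
            lintegral_congr (fun x => (ofReal_norm _).symm)
        _ ≤ ∫⁻ x, (F1 x + F2 x) := lintegral_mono_ae haebound
        _ = (∫⁻ x, F1 x) + ∫⁻ x, F2 x := lintegral_add_left' hF1m _
        _ ≤ ENNReal.ofReal ((A * M) * (C * C)) * ∑ k ∈ t, hB w (c k) (r k)
            + ENNReal.ofReal (((Kφ : ℝ) * M) * (C * C)) * ∑ k ∈ t, hB w (c k) (r k) :=
            add_le_add hF1int hF2int
        _ = ENNReal.ofReal ((A * M + (Kφ : ℝ) * M) * (C * C)) * ∑ k ∈ t, hB w (c k) (r k) := by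
            rw [show (A * M + (Kφ : ℝ) * M) * (C * C)
              = (A * M) * (C * C) + ((Kφ : ℝ) * M) * (C * C) by ring,
              ENNReal.ofReal_add (by positivity) (by positivity), add_mul]
        _ ≤ ENNReal.ofReal ((A * M + (Kφ : ℝ) * M) * (C * C)) * ENNReal.ofReal (ε / D) :=
            mul_le_mul_right hsumt _
        _ = ENNReal.ofReal (((A * M + (Kφ : ℝ) * M) * (C * C)) * (ε / D)) :=
            (ENNReal.ofReal_mul (by positivity)).symm
        _ ≤ ENNReal.ofReal ε := by
            apply ENNReal.ofReal_le_ofReal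
            have hle : (A * M + (Kφ : ℝ) * M) * (C * C) ≤ D := by rw [hDdef]; linarith
            have h4 : ((A * M + (Kφ : ℝ) * M) * (C * C)) * (ε / D) ≤ D * (ε / D) :=
              mul_le_mul_of_nonneg_right hle (by positivity)
            have h5 : D * (ε / D) = ε := by field_simp
            linarith
    exact (ENNReal.ofReal_le_ofReal_iff (le_of_lt hε)).mp hfinal
  have habs : |∫ x, fderiv ℝ φ x (v x)| = 0 := by
    by_contra hne
    have hpos : 0 < |∫ x, fderiv ℝ φ x (v x)| := lt_of_le_of_ne (abs_nonneg _) (Ne.symm hne)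
    have h6 := main (|∫ x, fderiv ℝ φ x (v x)| / 2) (by linarith)
    linarith
  show divPairing v φ = 0
  simp only [divPairing, neg_eq_zero]
  exact abs_eq_zero.mp habs


end
end

section
/- Let 1 < p < ∞ and let w ∈ L^{p'-1}_loc(ℝⁿ) be a weight with w^{p'-1} ∈ A_{p'}. If a compact set S ⊆ ℝⁿ has weighted Sobolev capacity Cap_{p'}^{w^{p'-1}}(S) = 0, then S is L^p_{1/w}-removable for div v = 0. -/
open MeasureTheory Metric Filter Set ENNReal

noncomputable section

variable {n : ℕ}

section AuxRemovable
open scoped NNReal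


/-- A smooth cutoff on ℝ: 0 for t ≤ 1/2, 1 for t ≥ 1, values in [0,1], bounded derivative. -/
lemma exists_cutoff : ∃ χ : ℝ → ℝ, ContDiff ℝ 1 χ ∧ (∀ t, t ≤ 1/2 → χ t = 0) ∧
    (∀ t, 1 ≤ t → χ t = 1) ∧ (∀ t, 0 ≤ χ t ∧ χ t ≤ 1) ∧
    ∃ M : ℝ, ∀ t, ‖fderiv ℝ χ t‖ ≤ M := by
  have haff : ContDiff ℝ 1 (fun t : ℝ => 2*t - 1) := by fun_prop
  have hc : ContDiff ℝ 1 (fun t => Real.smoothTransition (2*t - 1)) :=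
    (Real.smoothTransition.contDiff (n := 1)).comp haff
  refine ⟨fun t => Real.smoothTransition (2*t - 1), hc, ?_, ?_, ?_, ?_⟩
  · intro t ht
    exact Real.smoothTransition.zero_of_nonpos (by linarith)
  · intro t ht
    exact Real.smoothTransition.one_of_one_le (by linarith)
  · exact fun t => ⟨Real.smoothTransition.nonneg _, Real.smoothTransition.le_one _⟩
  · set χ : ℝ → ℝ := fun t => Real.smoothTransition (2*t - 1) with hχ
    have hsupp : Function.support (fderiv ℝ χ) ⊆ Set.Icc 0 1 := by
      intro t ht
      by_contra htmem
      apply ht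
      rcases not_and_or.1 (Set.mem_Icc.not.1 htmem) with h | h
      · push_neg at h
        have hev : χ =ᶠ[nhds t] (fun _ => (0:ℝ)) := by
          filter_upwards [Iio_mem_nhds (show t < 1/2 by linarith)] with s hs
          exact Real.smoothTransition.zero_of_nonpos (by simp only [Set.mem_Iio] at hs; linarith)
        rw [hev.fderiv_eq, fderiv_fun_const]
        rfl
      · push_neg at h
        have hev : χ =ᶠ[nhds t] (fun _ => (1:ℝ)) := by
          filter_upwards [Ioi_mem_nhds h] with s hs
          exact Real.smoothTransition.one_of_one_le (by simp only [Set.mem_Ioi] at hs; linarith)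
        rw [hev.fderiv_eq, fderiv_fun_const]
        rfl
    have hcs : HasCompactSupport (fderiv ℝ χ) :=
      HasCompactSupport.of_support_subset_isCompact isCompact_Icc hsupp
    exact hcs.exists_bound_of_continuous (hc.continuous_fderiv one_ne_zero)

/-- Product of bounded Lipschitz functions is Lipschitz. -/
lemma lipschitz_mul {n : ℕ} {f g : Eu n → ℝ} {Kf Kg : ℝ≥0} {Af Ag : ℝ}
    (hf : LipschitzWith Kf f) (hg : LipschitzWith Kg g)
    (hAf : ∀ x, |f x| ≤ Af) (hAg : ∀ x, |g x| ≤ Ag) :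
    LipschitzWith (Af * Kg + Ag * Kf : ℝ).toNNReal (fun x => f x * g x) := by
  apply LipschitzWith.of_dist_le_mul
  intro x y
  have h1 : dist (f x * g x) (f y * g y) ≤ Af * (Kg * dist x y) + Ag * (Kf * dist x y) := by
    have e : f x * g x - f y * g y = f x * (g x - g y) + (f x - f y) * g y := by ring
    rw [Real.dist_eq, e]
    have h2 := hf.dist_le_mul x y
    have h3 := hg.dist_le_mul x y
    rw [Real.dist_eq] at h2 h3
    calc |f x * (g x - g y) + (f x - f y) * g y| ≤ |f x * (g x - g y)| + |(f x - f y) * g y| :=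
          abs_add_le _ _
      _ = |f x| * |g x - g y| + |f x - f y| * |g y| := by rw [abs_mul, abs_mul]
      _ ≤ Af * (Kg * dist x y) + Ag * (Kf * dist x y) := by
          have hAf0 : 0 ≤ Af := le_trans (abs_nonneg _) (hAf x)
          have hAg0 : 0 ≤ Ag := le_trans (abs_nonneg _) (hAg y)
          have := abs_nonneg (g x - g y)
          have := abs_nonneg (f x - f y)
          nlinarith [hAf x, hAg y, abs_nonneg (f x), abs_nonneg (g y), dist_nonneg (x := x) (y := y),
            NNReal.coe_nonneg Kf, NNReal.coe_nonneg Kg]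
  refine h1.trans ?_
  have : Af * Kg + Ag * Kf ≤ ((Af * Kg + Ag * Kf : ℝ).toNNReal : ℝ) := Real.le_coe_toNNReal _
  nlinarith [dist_nonneg (x := x) (y := y)]


/-- Weighted Hölder inequality. -/
lemma holder_weight {n : ℕ} {p p' : ℝ} (hpp' : Real.HolderConjugate p p')
    (μ : Measure (Eu n)) (w : Eu n → ℝ) (hw0 : ∀ᵐ x ∂μ, 0 < w x)
    {F V : Eu n → ℝ≥0∞} (hF : AEMeasurable F μ) (hV : AEMeasurable V μ)
    (hW : AEMeasurable (fun x => ENNReal.ofReal (w x)) μ) :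
    ∫⁻ x, F x * V x ∂μ ≤
      (∫⁻ x, F x ^ p' * ENNReal.ofReal (w x ^ (p' - 1)) ∂μ) ^ (1/p') *
      (∫⁻ x, V x ^ p * (ENNReal.ofReal (w x))⁻¹ ∂μ) ^ (1/p) := by
  set W : Eu n → ℝ≥0∞ := fun x => ENNReal.ofReal (w x) with hWdef
  set f : Eu n → ℝ≥0∞ := fun x => F x * W x ^ (1/p) with hfdef
  set g : Eu n → ℝ≥0∞ := fun x => V x * W x ^ (-(1/p)) with hgdef
  have hfm : AEMeasurable f μ := hF.mul (hW.pow aemeasurable_const)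
  have hgm : AEMeasurable g μ := hV.mul (hW.pow aemeasurable_const)
  have h1 : ∫⁻ x, F x * V x ∂μ = ∫⁻ x, (f * g) x ∂μ := by
    apply lintegral_congr_ae
    filter_upwards [hw0] with x hx
    have hW0 : W x ≠ 0 := by simp [hWdef, ENNReal.ofReal_pos.2 hx, ne_of_gt]
    have hWtop : W x ≠ ⊤ := ENNReal.ofReal_ne_top
    have : W x ^ (1/p) * W x ^ (-(1/p)) = 1 := by
      rw [← ENNReal.rpow_add _ _ hW0 hWtop]
      simp
    simp only [Pi.mul_apply, hfdef, hgdef]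
    calc F x * V x = F x * V x * (W x ^ (1/p) * W x ^ (-(1/p))) := by rw [this, mul_one]
      _ = F x * W x ^ (1/p) * (V x * W x ^ (-(1/p))) := by ring
  rw [h1]
  have h2 := ENNReal.lintegral_mul_le_Lp_mul_Lq μ hpp'.symm hfm hgm
  refine h2.trans (le_of_eq ?_)
  congr 1
  · congr 1
    apply lintegral_congr_ae
    filter_upwards [hw0] with x hx
    have e1 : f x ^ p' = F x ^ p' * (W x ^ (1/p)) ^ p' :=
      ENNReal.mul_rpow_of_nonneg _ _ hpp'.symm.nonneg
    rw [e1, ← ENNReal.rpow_mul]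
    have e2 : 1/p * p' = p' - 1 := by
      have := hpp'.symm.div_conj_eq_sub_one
      field_simp
      field_simp at this
      linarith
    rw [e2]
    have e3 : ENNReal.ofReal (w x ^ (p' - 1)) = ENNReal.ofReal (w x) ^ (p' - 1) :=
      (ENNReal.ofReal_rpow_of_pos hx).symm
    rw [e3]
  · congr 1
    apply lintegral_congr fun x => ?_
    have e1 : g x ^ p = V x ^ p * (W x ^ (-(1/p))) ^ p :=
      ENNReal.mul_rpow_of_nonneg _ _ hpp'.nonneg
    have e2 : -(1/p) * p = -1 := by
      field_simp
      rw [div_self hpp'.ne_zero]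
    rw [e1, ← ENNReal.rpow_mul, e2, ENNReal.rpow_neg_one]




/-- `v ∈ L^p_{1/w}` is locally integrable when `w^{p'-1}` is locally integrable. -/
lemma v_locally_integrable {n : ℕ} {p p' : ℝ} (hpp' : Real.HolderConjugate p p')
    {w : Eu n → ℝ} (hw0 : ∀ᵐ x ∂(volume : Measure (Eu n)), 0 < w x)
    (hwm : AEMeasurable (fun x => ENNReal.ofReal (w x)) volume)
    (hloc : MeasureTheory.LocallyIntegrable (fun x => w x ^ (p' - 1)) volume)
    {v : Eu n → Eu n} (hvm : AEStronglyMeasurable v volume)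
    (hvint : (∫⁻ x, (ENNReal.ofReal ‖v x‖) ^ p * (ENNReal.ofReal (w x))⁻¹) < ⊤) :
    MeasureTheory.LocallyIntegrable v volume := by
  rw [MeasureTheory.locallyIntegrable_iff]
  intro K hK
  refine ⟨hvm.restrict, ?_⟩
  rw [hasFiniteIntegral_iff_norm]
  have key : ∫⁻ x in K, ENNReal.ofReal ‖v x‖ ≤
      (∫⁻ x in K, (1:ℝ≥0∞) ^ p' * ENNReal.ofReal (w x ^ (p' - 1))) ^ (1/p') *
      (∫⁻ x in K, (ENNReal.ofReal ‖v x‖) ^ p * (ENNReal.ofReal (w x))⁻¹) ^ (1/p) := by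
    have := holder_weight hpp' (volume.restrict K) w (ae_restrict_of_ae hw0)
      (aemeasurable_const (b := (1:ℝ≥0∞))) (hvm.norm.aemeasurable.ennreal_ofReal.restrict)
      hwm.restrict
    simpa using this
  refine lt_of_le_of_lt key ?_
  apply ENNReal.mul_lt_top
  · apply ENNReal.rpow_lt_top_of_nonneg hpp'.symm.one_div_nonneg
    have h := (hloc.integrableOn_isCompact hK).2
    rw [hasFiniteIntegral_iff_norm] at h
    refine ne_of_lt (lt_of_le_of_lt (lintegral_mono fun x => ?_) h)
    rw [one_rpow, one_mul]
    exact ENNReal.ofReal_le_ofReal (le_abs_self _)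
  · apply ENNReal.rpow_lt_top_of_nonneg hpp'.one_div_nonneg
    exact ne_of_lt (lt_of_le_of_lt (lintegral_mono' Measure.restrict_le_self le_rfl) hvint)

/-- Integrability of `x ↦ (Dg x)(v x)` for `g` Lipschitz with compact support. -/
lemma integrable_fderiv_apply {n : ℕ} {g : Eu n → ℝ} {K : ℝ≥0}
    (hg : LipschitzWith K g) (hgc : HasCompactSupport g)
    {v : Eu n → Eu n} (hvm : AEStronglyMeasurable v volume)
    (hvloc : MeasureTheory.LocallyIntegrable v volume) :
    Integrable (fun x => fderiv ℝ g x (v x)) volume := by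
  have hmeas : AEStronglyMeasurable (fun x => fderiv ℝ g x (v x)) volume :=
    (isBoundedBilinearMap_apply.continuous).comp_aestronglyMeasurable
      (((measurable_fderiv ℝ g).aestronglyMeasurable).prodMk hvm)
  have hKint : IntegrableOn (fun x => (K : ℝ) * ‖v x‖) (tsupport g) volume :=
    ((hvloc.integrableOn_isCompact hgc).norm.const_mul _)
  have hbound : Integrable ((tsupport g).indicator (fun x => (K : ℝ) * ‖v x‖)) volume := by
    rw [MeasureTheory.integrable_indicator_iff (isClosed_tsupport g).measurableSet]
    exact hKint
  apply Integrable.mono' hbound hmeas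
  apply Filter.Eventually.of_forall
  intro x
  by_cases hx : x ∈ tsupport g
  · rw [Set.indicator_of_mem hx]
    calc ‖fderiv ℝ g x (v x)‖ ≤ ‖fderiv ℝ g x‖ * ‖v x‖ := (fderiv ℝ g x).le_opNorm _
      _ ≤ (K : ℝ) * ‖v x‖ := by
          apply mul_le_mul_of_nonneg_right (norm_fderiv_le_of_lipschitz ℝ hg) (norm_nonneg _)
  · rw [Set.indicator_of_notMem hx]
    have : fderiv ℝ g x = 0 := by
      have hsub := support_fderiv_subset ℝ (f := g)
      by_contra hne
      exact hx (hsub (by simp [Function.mem_support, hne]))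
    simp [this]

end AuxRemovable

/-- **Sufficiency in the `L^p` case.** Let `1 < p < ∞` with conjugate `p'` and let
`w ∈ L^{p'-1}_loc(ℝⁿ)` be a weight with `w^{p'-1} ∈ A_{p'}`. If a compact set `S ⊆ ℝⁿ`
has weighted Sobolev capacity `Cap_{p'}^{w^{p'-1}}(S) = 0`, then `S` is
`L^p_{1/w}`-removable for `div v = 0`. -/
theorem removableLp_of_cap_zero {n : ℕ} (p p' : ℝ) (hpp' : Real.HolderConjugate p p')
    (w : Eu n → ℝ) (hw : IsWeight w)
    (hloc : MeasureTheory.LocallyIntegrable (fun x => w x ^ (p' - 1)) volume)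
    (hA : MuckenhouptAq p' (fun x => w x ^ (p' - 1)))
    (S : Set (Eu n)) (hS : IsCompact S)
    (hcap : SobCap p' (fun x => w x ^ (p' - 1)) S = 0) :
    RemovableLp p w S := by
  intro v hv hdiv φ hφ
  obtain ⟨⟨Kφ, hφlip⟩, hφc⟩ := hφ
  obtain ⟨Aφ, hAφ⟩ := hφc.exists_bound_of_continuous hφlip.continuous
  obtain ⟨χ, hχd, hχ0, hχ1, hχ01, M, hM⟩ := exists_cutoff
  have hM0 : 0 ≤ M := le_trans (norm_nonneg _) (hM 0)
  have hAφ0 : 0 ≤ Aφ := le_trans (norm_nonneg _) (hAφ 0)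
  have hw0 : ∀ᵐ x ∂(volume : Measure (Eu n)), 0 < w x := hw.2
  have hwm : AEMeasurable (fun x => ENNReal.ofReal (w x)) volume :=
    hw.1.aestronglyMeasurable.aemeasurable.ennreal_ofReal
  obtain ⟨hvm, hvint⟩ := hv
  have hvloc := v_locally_integrable hpp' hw0 hwm hloc hvm hvint
  set Ev : ℝ≥0∞ := (∫⁻ x, (ENNReal.ofReal ‖v x‖) ^ p * (ENNReal.ofReal (w x))⁻¹) ^ (1/p)
    with hEvdef
  have hEvtop : Ev ≠ ⊤ :=
    (ENNReal.rpow_lt_top_of_nonneg hpp'.one_div_nonneg hvint.ne).ne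
  set c1 : ℝ≥0∞ := ENNReal.ofReal (2 * Kφ) with hc1def
  set c2 : ℝ≥0∞ := ENNReal.ofReal (Aφ * M) with hc2def
  set KK : ℝ≥0∞ := (c1 + c2) * Ev with hKKdef
  have hKKtop : KK ≠ ⊤ :=
    ENNReal.mul_ne_top (ENNReal.add_ne_top.2 ⟨ENNReal.ofReal_ne_top, ENNReal.ofReal_ne_top⟩) hEvtop
  set C0 : ℝ := KK.toReal with hC0def
  have hVm : AEMeasurable (fun x => ENNReal.ofReal ‖v x‖) volume :=
    hvm.norm.aemeasurable.ennreal_ofReal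
  have key : ∀ ε : ℝ, 0 < ε → |divPairing v φ| ≤ C0 * ε ^ (1/p') := by
    intro ε hε
    -- extract a test function from zero capacity
    have hcap' : SobCap p' (fun x => w x ^ (p' - 1)) S < ENNReal.ofReal ε := by
      rw [hcap]; exact ENNReal.ofReal_pos.2 hε
    unfold SobCap at hcap'
    rw [iInf_lt_iff] at hcap'
    obtain ⟨ψ, hψ⟩ := hcap'
    rw [iInf_lt_iff] at hψ
    obtain ⟨⟨hψd, hψc, U, hUopen, hSU, hψ1⟩, hint⟩ := hψ
    have hψd1 : ContDiff ℝ 1 ψ := hψd.of_le (by simp)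
    obtain ⟨Kψ, hψlip⟩ := ContDiff.lipschitzWith_of_hasCompactSupport hψc hψd1 one_ne_zero
    -- the cut-off function η
    set η : Eu n → ℝ := fun x => χ (ψ x) with hηdef
    have hηd : ContDiff ℝ 1 η := hχd.comp hψd1
    have hη01 : ∀ x, 0 ≤ η x ∧ η x ≤ 1 := fun x => hχ01 _
    have hη1 : ∀ x ∈ U, η x = 1 := fun x hx => hχ1 _ (hψ1 x hx)
    have hηbd : ∀ x, |η x| ≤ 1 :=
      fun x => abs_le.2 ⟨by linarith [(hη01 x).1], (hη01 x).2⟩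
    have hηabs : ∀ x, |η x| ≤ 2 * |ψ x| := by
      intro x
      rcases le_or_gt (ψ x) (1/2) with h | h
      · have : η x = 0 := hχ0 _ h
        rw [this]
        simp [abs_nonneg]
      · refine (hηbd x).trans ?_
        have h2 : ψ x ≤ |ψ x| := le_abs_self _
        linarith
    have hχlip : LipschitzWith M.toNNReal χ := by
      apply lipschitzWith_of_nnnorm_fderiv_le (hχd.differentiable one_ne_zero)
      intro x
      rw [← NNReal.coe_le_coe, coe_nnnorm, Real.coe_toNNReal M hM0]
      exact hM x
    have hηlip : LipschitzWith (M.toNNReal * Kψ) η := hχlip.comp hψlip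
    have hηfd : ∀ x, ‖fderiv ℝ η x‖ ≤ M * ‖fderiv ℝ ψ x‖ := by
      intro x
      have hd1 : DifferentiableAt ℝ χ (ψ x) := hχd.differentiable one_ne_zero _
      have hd2 : DifferentiableAt ℝ ψ x := hψd1.differentiable one_ne_zero x
      have hcomp : fderiv ℝ η x = (fderiv ℝ χ (ψ x)).comp (fderiv ℝ ψ x) :=
        fderiv_comp x hd1 hd2
      rw [hcomp]
      exact (ContinuousLinearMap.opNorm_comp_le _ _).trans
        (mul_le_mul_of_nonneg_right (hM _) (norm_nonneg _))
    -- the two pieces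
    set g1 : Eu n → ℝ := fun x => φ x * η x with hg1def
    set g2 : Eu n → ℝ := fun x => φ x - φ x * η x with hg2def
    have hg1lip : LipschitzWith (Aφ * (M.toNNReal * Kψ) + 1 * Kφ : ℝ).toNNReal g1 :=
      lipschitz_mul hφlip hηlip (fun x => by rw [← Real.norm_eq_abs]; exact hAφ x) hηbd
    have hg1c : HasCompactSupport g1 := hφc.mul_right
    have hg2lip : LipschitzWith (Kφ + (Aφ * (M.toNNReal * Kψ) + 1 * Kφ : ℝ).toNNReal) g2 :=
      hφlip.sub hg1lip
    have hg2c : HasCompactSupport g2 := by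
      apply hφc.mono
      intro x hx
      simp only [Function.mem_support, hg2def] at hx ⊢
      intro h0
      exact hx (by rw [h0, zero_mul, sub_zero])
    have hg2supp : tsupport g2 ⊆ Uᶜ := by
      apply closure_minimal ?_ hUopen.isClosed_compl
      intro x hx
      simp only [Function.mem_support, hg2def] at hx
      intro hxU
      exact hx (by rw [hη1 x hxU, mul_one, sub_self])
    have hdisj : Disjoint (tsupport g2) S :=
      Set.disjoint_left.2 fun x hx hxS => (hg2supp hx) (hSU hxS)
    have hzero2 : divPairing v g2 = 0 := hdiv g2 ⟨⟨_, hg2lip⟩, hg2c⟩ hdisj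
    have I1 := integrable_fderiv_apply hg1lip hg1c hvm hvloc
    have I2 := integrable_fderiv_apply hg2lip hg2c hvm hvloc
    -- splitting of the pairing
    have hsplit : (fun x => fderiv ℝ φ x (v x)) =ᵐ[(volume : Measure (Eu n))]
        (fun x => fderiv ℝ g1 x (v x) + fderiv ℝ g2 x (v x)) := by
      filter_upwards [hφlip.ae_differentiableAt] with x hx
      have hηx : DifferentiableAt ℝ η x := hηd.differentiable one_ne_zero x
      have h1 : DifferentiableAt ℝ g1 x := hx.mul hηx
      have h2 : fderiv ℝ g2 x = fderiv ℝ φ x - fderiv ℝ g1 x := fderiv_sub hx h1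
      rw [h2]
      simp [ContinuousLinearMap.sub_apply]
    have hd : divPairing v φ = -∫ x, fderiv ℝ g1 x (v x) := by
      have hIeq : ∫ x, fderiv ℝ φ x (v x) =
          (∫ x, fderiv ℝ g1 x (v x)) + ∫ x, fderiv ℝ g2 x (v x) := by
        rw [integral_congr_ae hsplit]
        exact integral_add I1 I2
      have h20 : ∫ x, fderiv ℝ g2 x (v x) = 0 := by
        have := hzero2
        rw [divPairing] at this
        linarith
      rw [divPairing, hIeq, h20, add_zero]
    have habs : |divPairing v φ| ≤ (∫⁻ x, ENNReal.ofReal ‖fderiv ℝ g1 x (v x)‖).toReal := by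
      rw [hd, abs_neg, ← Real.norm_eq_abs]
      exact norm_integral_le_lintegral_norm _
    -- the main estimate
    set Ψ : Eu n → ℝ≥0∞ := fun x => ENNReal.ofReal |ψ x| with hΨdef
    set G : Eu n → ℝ≥0∞ := fun x => ENNReal.ofReal ‖fderiv ℝ ψ x‖ with hGdef
    have hΨm : AEMeasurable Ψ volume :=
      (hψd1.continuous.abs.measurable).aemeasurable.ennreal_ofReal
    have hGm : AEMeasurable G volume :=
      ((hψd1.continuous_fderiv one_ne_zero).norm.measurable).aemeasurable.ennreal_ofReal
    have hptwise : ∀ᵐ x ∂(volume : Measure (Eu n)),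
        ENNReal.ofReal ‖fderiv ℝ g1 x (v x)‖ ≤
          (c1 * Ψ x + c2 * G x) * ENNReal.ofReal ‖v x‖ := by
      filter_upwards [hφlip.ae_differentiableAt] with x hx
      have hηx : DifferentiableAt ℝ η x := hηd.differentiable one_ne_zero x
      have hfd : fderiv ℝ g1 x = φ x • fderiv ℝ η x + η x • fderiv ℝ φ x :=
        fderiv_mul hx hηx
      have hnorm : ‖fderiv ℝ g1 x‖ ≤ 2 * ↑Kφ * |ψ x| + Aφ * M * ‖fderiv ℝ ψ x‖ := by
        rw [hfd]
        refine (norm_add_le _ _).trans ?_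
        rw [norm_smul, norm_smul, Real.norm_eq_abs, Real.norm_eq_abs]
        have b1 : |φ x| * ‖fderiv ℝ η x‖ ≤ Aφ * (M * ‖fderiv ℝ ψ x‖) := by
          apply mul_le_mul (by rw [← Real.norm_eq_abs]; exact hAφ x) (hηfd x)
            (norm_nonneg _) hAφ0
        have b2 : |η x| * ‖fderiv ℝ φ x‖ ≤ (2 * |ψ x|) * ↑Kφ := by
          apply mul_le_mul (hηabs x) (norm_fderiv_le_of_lipschitz ℝ hφlip)
            (norm_nonneg _) (by positivity)
        linarith
      have hreal : ‖fderiv ℝ g1 x (v x)‖ ≤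
          (2 * ↑Kφ * |ψ x| + Aφ * M * ‖fderiv ℝ ψ x‖) * ‖v x‖ := by
        refine ((fderiv ℝ g1 x).le_opNorm _).trans ?_
        exact mul_le_mul_of_nonneg_right hnorm (norm_nonneg _)
      have e1 : c1 * Ψ x = ENNReal.ofReal (2 * ↑Kφ * |ψ x|) :=
        (ENNReal.ofReal_mul (by positivity)).symm
      have e2 : c2 * G x = ENNReal.ofReal (Aφ * M * ‖fderiv ℝ ψ x‖) :=
        (ENNReal.ofReal_mul (by positivity)).symm
      rw [e1, e2, ← ENNReal.ofReal_add (by positivity) (by positivity),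
        ← ENNReal.ofReal_mul (by positivity)]
      exact ENNReal.ofReal_le_ofReal hreal
    have hI : (∫⁻ x, ENNReal.ofReal ‖fderiv ℝ g1 x (v x)‖) ≤
        c1 * (∫⁻ x, Ψ x * ENNReal.ofReal ‖v x‖) +
        c2 * (∫⁻ x, G x * ENNReal.ofReal ‖v x‖) := by
      refine (lintegral_mono_ae hptwise).trans ?_
      have hre : ∀ x, (c1 * Ψ x + c2 * G x) * ENNReal.ofReal ‖v x‖ =
          c1 * (Ψ x * ENNReal.ofReal ‖v x‖) + c2 * (G x * ENNReal.ofReal ‖v x‖) := by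
        intro x; ring
      rw [lintegral_congr hre,
        lintegral_add_left' (f := fun x => c1 * (Ψ x * ENNReal.ofReal ‖v x‖)) ((hΨm.mul hVm).const_mul c1),
        lintegral_const_mul' c1 _ ENNReal.ofReal_ne_top,
        lintegral_const_mul' c2 _ ENNReal.ofReal_ne_top]
    have hcapb1 : (∫⁻ x, Ψ x ^ p' * ENNReal.ofReal (w x ^ (p' - 1))) ≤ ENNReal.ofReal ε := by
      refine le_trans (lintegral_mono fun x => ?_) hint.le
      rw [hΨdef]
      simp only
      rw [ENNReal.ofReal_rpow_of_nonneg (abs_nonneg _) hpp'.symm.nonneg]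
      gcongr
      exact le_self_add
    have hcapb2 : (∫⁻ x, G x ^ p' * ENNReal.ofReal (w x ^ (p' - 1))) ≤ ENNReal.ofReal ε := by
      refine le_trans (lintegral_mono fun x => ?_) hint.le
      rw [hGdef]
      simp only
      rw [ENNReal.ofReal_rpow_of_nonneg (norm_nonneg _) hpp'.symm.nonneg]
      gcongr
      exact le_add_self
    have hH1 : (∫⁻ x, Ψ x * ENNReal.ofReal ‖v x‖) ≤ (ENNReal.ofReal ε) ^ (1/p') * Ev := by
      refine (holder_weight hpp' volume w hw0 hΨm hVm hwm).trans ?_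
      rw [hEvdef]
      exact mul_le_mul_left (ENNReal.rpow_le_rpow hcapb1 hpp'.symm.one_div_nonneg) _
    have hH2 : (∫⁻ x, G x * ENNReal.ofReal ‖v x‖) ≤ (ENNReal.ofReal ε) ^ (1/p') * Ev := by
      refine (holder_weight hpp' volume w hw0 hGm hVm hwm).trans ?_
      rw [hEvdef]
      exact mul_le_mul_left (ENNReal.rpow_le_rpow hcapb2 hpp'.symm.one_div_nonneg) _
    have hItotal : (∫⁻ x, ENNReal.ofReal ‖fderiv ℝ g1 x (v x)‖) ≤
        KK * (ENNReal.ofReal ε) ^ (1/p') := by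
      refine hI.trans ?_
      calc c1 * (∫⁻ x, Ψ x * ENNReal.ofReal ‖v x‖) +
            c2 * (∫⁻ x, G x * ENNReal.ofReal ‖v x‖)
          ≤ c1 * ((ENNReal.ofReal ε) ^ (1/p') * Ev) +
            c2 * ((ENNReal.ofReal ε) ^ (1/p') * Ev) := by
            exact add_le_add (mul_le_mul_right hH1 _) (mul_le_mul_right hH2 _)
        _ = KK * (ENNReal.ofReal ε) ^ (1/p') := by
            rw [hKKdef]; ring
    have hfin : KK * (ENNReal.ofReal ε) ^ (1/p') ≠ ⊤ :=
      ENNReal.mul_ne_top hKKtop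
        (ENNReal.rpow_ne_top_of_nonneg hpp'.symm.one_div_nonneg ENNReal.ofReal_ne_top)
    have hlast := habs.trans (ENNReal.toReal_mono hfin hItotal)
    rw [ENNReal.toReal_mul, ← ENNReal.toReal_rpow, ENNReal.toReal_ofReal hε.le] at hlast
    exact hlast
  -- conclude
  have habs0 : |divPairing v φ| ≤ 0 := by
    by_contra hcon
    push_neg at hcon
    have hC0 : 0 ≤ C0 := ENNReal.toReal_nonneg
    have hC1 : (0:ℝ) < C0 + 1 := by linarith
    set t : ℝ := |divPairing v φ| / (C0 + 1) with htdef
    have ht : 0 < t := div_pos hcon hC1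
    have h2 := key (t ^ p') (Real.rpow_pos_of_pos ht _)
    have h3 : (t ^ p') ^ (1/p') = t := by
      rw [← Real.rpow_mul ht.le, mul_one_div, div_self hpp'.symm.ne_zero, Real.rpow_one]
    rw [h3] at h2
    have ht2 : C0 * t + t = |divPairing v φ| := by
      rw [htdef]
      field_simp
    linarith
  have := abs_nonneg (divPairing v φ)
  have : |divPairing v φ| = 0 := le_antisymm habs0 (abs_nonneg _)
  exact abs_eq_zero.mp this

end
end
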